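/- No cautious algorithm solves gathering from a configuration with more than two border nodes: if robots do not know the total number R of robots, any cautious algorithm started from a configuration having more than two borders fails to gather, since the configuration then contains at least two parts of the visibility graph separated in both ring directions by more than φ empty nodes, and robots of distinct parts can never merge. -/
import Mathlib


set_option autoImplicit false

/-! ### Luminous myopic robots on an anonymous ring: basic model -/

/-- A configuration of `R` luminous robots with light colors in `C`
on an anonymous ring with `N` nodes (the nodes are `ZMod N`). -/
structure Config (N R : ℕ) (C : Type) where
  pos : Fin R → ZMod N
  light : Fin R → C

namespace Gathering

variable {N R : ℕ} {C : Type}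

/-- The set of light colors present at node `u`. -/
def colorsAt (cfg : Config N R C) (u : ZMod N) : Set C :=
  {c | ∃ r, cfg.pos r = u ∧ cfg.light r = c}

/-- Node `u` hosts at least one robot. -/
def occupiedNode (cfg : Config N R C) (u : ZMod N) : Prop :=
  ∃ r, cfg.pos r = u

/-- The view from node `u` with visibility range `φ`, in orientation `dir`:
the set of colors at signed offset `k`, for `|k| ≤ φ` (and `∅` beyond the range). -/
def nodeView (φ : ℕ) (cfg : Config N R C) (u : ZMod N) (dir : Bool) : ℤ → Set C :=
  fun k => if |k| ≤ (φ : ℤ) then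
      colorsAt cfg (u + (if dir then (k : ZMod N) else ((-k : ℤ) : ZMod N)))
    else ∅

/-- Node `u` is a border node: it is occupied, all `φ` nodes on one side are
empty, and some node within distance `φ` on the other side is occupied. -/
def isBorderNode (φ : ℕ) (cfg : Config N R C) (u : ZMod N) : Prop :=
  occupiedNode cfg u ∧
  ∃ dir : Bool,
    (∀ k : ℤ, 1 ≤ k → k ≤ (φ : ℤ) →
      ¬ occupiedNode cfg (u + (if dir then (k : ZMod N) else ((-k : ℤ) : ZMod N)))) ∧
    (∃ k : ℤ, 1 ≤ k ∧ k ≤ (φ : ℤ) ∧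
      occupiedNode cfg (u + (if dir then ((-k : ℤ) : ZMod N) else (k : ZMod N))))

/-- Robot `r` is a border robot. -/
def isBorderRobot (φ : ℕ) (cfg : Config N R C) (r : Fin R) : Prop :=
  isBorderNode φ cfg (cfg.pos r)

/-- The borders of a configuration: an occupied node together with a direction
in which the next `φ` nodes are all empty (their number is always even). -/
def borderPairs (φ : ℕ) (cfg : Config N R C) : Set (ZMod N × Bool) :=
  {p | occupiedNode cfg p.1 ∧
    ∀ k : ℤ, 1 ≤ k → k ≤ (φ : ℤ) →
      ¬ occupiedNode cfg (p.1 + (if p.2 then (k : ZMod N) else ((-k : ℤ) : ZMod N)))}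

/-- Ring distance between two nodes. -/
def ringDist (u v : ZMod N) : ℕ := min (u - v).val (v - u).val

/-- Robots `r` and `r'` can observe each other. -/
def canSee (φ : ℕ) (cfg : Config N R C) (r r' : Fin R) : Prop :=
  ringDist (cfg.pos r) (cfg.pos r') ≤ φ

/-- The visibility graph of the configuration is connected. -/
def VisConnected (φ : ℕ) (cfg : Config N R C) : Prop :=
  ∀ r r' : Fin R, Relation.ReflTransGen (canSee φ cfg) r r'

/-- The span of a configuration: the least `m` such that all occupied nodes fit
in a window of `m + 1` consecutive nodes.  In a configuration with exactly two
borders this is the distance `D` between the two border nodes. -/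
noncomputable def spanDist (cfg : Config N R C) : ℕ :=
  sInf {m : ℕ | ∃ b : ZMod N, ∀ u, occupiedNode cfg u → ∃ i : ℕ, i ≤ m ∧ u = b + (i : ZMod N)}

/-! ### Algorithms and asynchronous executions -/

/-- A deterministic algorithm for luminous robots in the full-light model:
given the robot's own color and its (oriented) view, output a new color and a
movement (`+1`, `0` or `-1`, relative to the orientation of the view). -/
structure Algo (C : Type) where
  out : C → (ℤ → Set C) → C × SignType

/-- The destination of a movement `m` from node `u`, for view orientation `dir`. -/
def moveTarget (u : ZMod N) (dir : Bool) (m : SignType) : ZMod N :=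
  u + (if dir then ((m : ℤ) : ZMod N) else ((-(m : ℤ) : ℤ) : ZMod N))

/-- An execution of algorithm `A` under a fair asynchronous scheduler.
At each instant every robot either stays idle, performs a Look (together with
the deterministic Compute, recording a plan: a new color and a destination
node; the orientation of the snapshot is chosen adversarially, as robots are
disoriented), becomes visible with its new color (end of the Compute phase,
keeping its pending plan), or performs its atomic Move, completing the cycle.
A robot `r` with `plan t r ≠ none` is a robot whose view may be outdated. -/
structure AsyncExec (N R : ℕ) (C : Type) (φ : ℕ) (A : Algo C) where
  cfg : ℕ → Config N R C
  plan : ℕ → Fin R → Option (C × ZMod N)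
  init_plan : ∀ r, plan 0 r = none
  step : ∀ (t : ℕ) (r : Fin R),
      ((cfg (t+1)).pos r = (cfg t).pos r ∧ (cfg (t+1)).light r = (cfg t).light r ∧
        plan (t+1) r = plan t r)
    ∨ (plan t r = none ∧ (cfg (t+1)).pos r = (cfg t).pos r ∧
        (cfg (t+1)).light r = (cfg t).light r ∧
        ∃ dir : Bool,
          plan (t+1) r =
            some ((A.out ((cfg t).light r) (nodeView φ (cfg t) ((cfg t).pos r) dir)).1,
              moveTarget ((cfg t).pos r) dir
                (A.out ((cfg t).light r) (nodeView φ (cfg t) ((cfg t).pos r) dir)).2))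
    ∨ (∃ c u, plan t r = some (c, u) ∧ (cfg (t+1)).pos r = (cfg t).pos r ∧
        (cfg (t+1)).light r = c ∧ plan (t+1) r = some (c, u))
    ∨ (∃ c u, plan t r = some (c, u) ∧ (cfg (t+1)).pos r = u ∧
        (cfg (t+1)).light r = c ∧ plan (t+1) r = none)
  fair : ∀ (r : Fin R) (t : ℕ), ∃ t', t ≤ t' ∧ plan t' r ≠ none ∧ plan (t'+1) r = none

/-- The execution achieves gathering: from some time on, all robots occupy a
single node and remain there forever. -/
def AchievesGathering {N R : ℕ} {C : Type} {φ : ℕ} {A : Algo C}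
    (e : AsyncExec N R C φ A) : Prop :=
  ∃ (t : ℕ) (u : ZMod N), ∀ t', t ≤ t' → ∀ r, (e.cfg t').pos r = u

/-! ### Initial configurations -/

/-- The robots occupy a segment `G'` of `Minit` nodes with base (border) node
`b`: both endpoints of the segment are occupied and are borders (the `φ` nodes
beyond each endpoint are empty), every occupied node lies in the segment,
consecutive occupied nodes are at distance at most `φ` (`H_init ≤ φ`, i.e. the
visibility graph is connected), and `Oinit` is the number of occupied nodes of
the segment. -/
def SegmentInitOn (φ : ℕ) (cfg : Config N R C) (b : ZMod N) (Minit Oinit : ℕ) : Prop :=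
  2 ≤ Minit ∧
  occupiedNode cfg b ∧ occupiedNode cfg (b + ((Minit - 1 : ℕ) : ZMod N)) ∧
  (∀ u, occupiedNode cfg u → ∃ i : ℕ, i < Minit ∧ u = b + (i : ZMod N)) ∧
  (∀ k : ℕ, 1 ≤ k → k ≤ φ →
    ¬ occupiedNode cfg (b - (k : ZMod N)) ∧
    ¬ occupiedNode cfg (b + ((Minit - 1 : ℕ) : ZMod N) + (k : ZMod N))) ∧
  (∀ i : ℕ, i + 1 < Minit → occupiedNode cfg (b + (i : ZMod N)) →
    ∃ j : ℕ, i < j ∧ j ≤ i + φ ∧ j < Minit ∧ occupiedNode cfg (b + (j : ZMod N))) ∧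
  Oinit = {i : Fin Minit | occupiedNode cfg (b + ((i : ℕ) : ZMod N))}.ncard

/-- Admissible initial configuration: all robots have the color `white`, and
the robots occupy a segment with two borders and connected visibility graph. -/
def AdmissibleInit (φ : ℕ) (cfg : Config N R C) (white : C) (Minit Oinit : ℕ) : Prop :=
  (∀ r, cfg.light r = white) ∧ ∃ b : ZMod N, SegmentInitOn φ cfg b Minit Oinit

/-! ### Edge-view symmetry and cautiousness -/

/-- Robots `r1` and `r2` are indistinguishable: they have the same color and
the same view (up to reversal, as robots are disoriented). -/
def viewsEq (φ : ℕ) (cfg : Config N R C) (r1 r2 : Fin R) : Prop :=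
  cfg.light r1 = cfg.light r2 ∧
  (nodeView φ cfg (cfg.pos r1) true = nodeView φ cfg (cfg.pos r2) true ∨
   nodeView φ cfg (cfg.pos r1) true = nodeView φ cfg (cfg.pos r2) false)

/-- Definition 20: a configuration is edge-view-symmetric if at least two
distinct nodes host robots and there is an edge `(u_i, u_{i+1})` such that for
every `k ≥ 0`, every robot at `u_{i-k}` has an indistinguishable counterpart at
`u_{i+k+1}`. -/
def EdgeViewSymmetric (φ : ℕ) (cfg : Config N R C) : Prop :=
  (∃ u v : ZMod N, u ≠ v ∧ occupiedNode cfg u ∧ occupiedNode cfg v) ∧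
  ∃ i : ZMod N, ∀ (k : ℕ) (r1 : Fin R), cfg.pos r1 = i - (k : ZMod N) →
    ∃ r2 : Fin R, cfg.pos r2 = i + (k : ZMod N) + 1 ∧ viewsEq φ cfg r1 r2

/-- Definition 23: an algorithm is cautious if robots only ever move toward
other occupied nodes (they never expand the span of the visibility graph). -/
def Cautious (φ : ℕ) (A : Algo C) : Prop :=
  ∀ (c : C) (v : ℤ → Set C),
    ((A.out c v).2 = 1 → ∃ k : ℤ, 1 ≤ k ∧ k ≤ (φ : ℤ) ∧ v k ≠ ∅) ∧
    ((A.out c v).2 = -1 → ∃ k : ℤ, 1 ≤ k ∧ k ≤ (φ : ℤ) ∧ v (-k) ≠ ∅)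

end Gathering

namespace Gathering

/-! ### Algorithm 1 (three colors) -/

/-- The three light colors of Algorithm 1. -/
inductive C3 : Type
  | White
  | Red
  | Blue
deriving DecidableEq

open Classical in
/-- The rules of Algorithm 1, for a view oriented so that the `φ` nodes at
negative offsets are empty (the observing robot is a border robot and the
positive direction points inward), in priority order
R1, R2a, R2b, R3a, R3b, R4a, R4b, R5. -/
noncomputable def algo1Rules (φ : ℕ) (c : C3) (v : ℤ → Set C3) : C3 × SignType :=
  -- R1 : ∅^φ [W!] (¬∅^φ)  ::  R
  if c = C3.White ∧ v 0 = {C3.White} then (C3.Red, 0)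
  -- R2a : ∅^φ [R!] (∅, B!) (¬(∅^(φ-1)))  ::  B, →
  else if c = C3.Red ∧ v 0 = {C3.Red} ∧ (v 1 = ∅ ∨ v 1 = {C3.Blue}) ∧
      ¬ (∀ k : ℤ, 2 ≤ k → k ≤ (φ : ℤ) → v k = ∅) then (C3.Blue, 1)
  -- R2b : ∅^φ [R!] (W) (?^(φ-1))  ::  B, →
  else if c = C3.Red ∧ v 0 = {C3.Red} ∧ C3.White ∈ v 1 ∧
      (∀ k : ℤ, 2 ≤ k → k ≤ (φ : ℤ) → v k ≠ ∅) then (C3.Blue, 1)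
  -- R3a : ∅^φ [B!] (∅, R!) (¬(∅^(φ-1)))  ::  R, →
  else if c = C3.Blue ∧ v 0 = {C3.Blue} ∧ (v 1 = ∅ ∨ v 1 = {C3.Red}) ∧
      ¬ (∀ k : ℤ, 2 ≤ k → k ≤ (φ : ℤ) → v k = ∅) then (C3.Red, 1)
  -- R3b : ∅^φ [B!] (W) (?^(φ-1))  ::  R, →
  else if c = C3.Blue ∧ v 0 = {C3.Blue} ∧ C3.White ∈ v 1 ∧
      (∀ k : ℤ, 2 ≤ k → k ≤ (φ : ℤ) → v k ≠ ∅) then (C3.Red, 1)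
  -- R4a : ∅^φ [R [W]] (¬∅^φ)  ::  R
  else if c = C3.White ∧ C3.Red ∈ v 0 then (C3.Red, 0)
  -- R4b : ∅^φ [B [W]] (¬∅^φ)  ::  B
  else if c = C3.White ∧ C3.Blue ∈ v 0 then (C3.Blue, 0)
  -- R5 : ∅^φ [R!] (B!) (∅^(φ-1))  ::  B, →
  else if c = C3.Red ∧ v 0 = {C3.Red} ∧ v 1 = {C3.Blue} ∧
      (∀ k : ℤ, 2 ≤ k → k ≤ (φ : ℤ) → v k = ∅) then (C3.Blue, 1)
  else (c, 0)

open Classical in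
/-- Algorithm 1: the rules are applied in the orientation in which the `φ`
nearest nodes on one side are all empty.  A robot seeing no other robot does
nothing (rule R0), and no rule is enabled for a non-border robot. -/
noncomputable def algo1 (φ : ℕ) : Algo C3 where
  out := fun c v =>
    if (∀ k : ℤ, 1 ≤ k → k ≤ (φ : ℤ) → v (-k) = ∅) ∧
       (∀ k : ℤ, 1 ≤ k → k ≤ (φ : ℤ) → v k = ∅) then (c, 0)
    else if ∀ k : ℤ, 1 ≤ k → k ≤ (φ : ℤ) → v (-k) = ∅ then algo1Rules φ c v
    else if ∀ k : ℤ, 1 ≤ k → k ≤ (φ : ℤ) → v k = ∅ then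
      ((algo1Rules φ c (fun k => v (-k))).1, -(algo1Rules φ c (fun k => v (-k))).2)
    else (c, 0)

/-! ### Algorithm 2 (four colors) -/

/-- The four light colors of Algorithm 2. -/
inductive C4 : Type
  | White
  | Red
  | Blue
  | Purple
deriving DecidableEq

open Classical in
/-- The rules of Algorithm 2, for a view oriented so that the `φ` nodes at
negative offsets are empty, in priority order
R1, R2a-1, R2a-2, R2b, R3a-1, R3a-2, R3b, R4a, R4b, R5a, R5b-1, R5b-2, R5b-3. -/
noncomputable def algo2Rules (φ : ℕ) (c : C4) (v : ℤ → Set C4) : C4 × SignType :=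
  -- R1 : ∅^φ [W!] (¬∅^φ)  ::  R
  if c = C4.White ∧ v 0 = {C4.White} then (C4.Red, 0)
  -- R2a-1 : ∅^φ [R!] (∅) (¬(∅^(φ-1)))  ::  →
  else if c = C4.Red ∧ v 0 = {C4.Red} ∧ v 1 = ∅ ∧
      ¬ (∀ k : ℤ, 2 ≤ k → k ≤ (φ : ℤ) → v k = ∅) then (C4.Red, 1)
  -- R2a-2 : ∅^φ [R!] (¬W, R) (¬(∅^(φ-1)))  ::  →
  else if c = C4.Red ∧ v 0 = {C4.Red} ∧ (C4.Red ∈ v 1 ∧ C4.White ∉ v 1) ∧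
      ¬ (∀ k : ℤ, 2 ≤ k → k ≤ (φ : ℤ) → v k = ∅) then (C4.Red, 1)
  -- R2b : ∅^φ [R!] (W) (?^(φ-1))  ::  B, →
  else if c = C4.Red ∧ v 0 = {C4.Red} ∧ C4.White ∈ v 1 ∧
      (∀ k : ℤ, 2 ≤ k → k ≤ (φ : ℤ) → v k ≠ ∅) then (C4.Blue, 1)
  -- R3a-1 : ∅^φ [B!] (∅) (¬(∅^(φ-1)))  ::  →
  else if c = C4.Blue ∧ v 0 = {C4.Blue} ∧ v 1 = ∅ ∧
      ¬ (∀ k : ℤ, 2 ≤ k → k ≤ (φ : ℤ) → v k = ∅) then (C4.Blue, 1)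
  -- R3a-2 : ∅^φ [B!] (¬W, B) (¬(∅^(φ-1)))  ::  →
  else if c = C4.Blue ∧ v 0 = {C4.Blue} ∧ (C4.Blue ∈ v 1 ∧ C4.White ∉ v 1) ∧
      ¬ (∀ k : ℤ, 2 ≤ k → k ≤ (φ : ℤ) → v k = ∅) then (C4.Blue, 1)
  -- R3b : ∅^φ [B!] (W) (?^(φ-1))  ::  R, →
  else if c = C4.Blue ∧ v 0 = {C4.Blue} ∧ C4.White ∈ v 1 ∧
      (∀ k : ℤ, 2 ≤ k → k ≤ (φ : ℤ) → v k ≠ ∅) then (C4.Red, 1)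
  -- R4a : ∅^φ [R [W]] (¬∅^φ)  ::  R
  else if c = C4.White ∧ C4.Red ∈ v 0 then (C4.Red, 0)
  -- R4b : ∅^φ [B [W]] (¬∅^φ)  ::  B
  else if c = C4.White ∧ C4.Blue ∈ v 0 then (C4.Blue, 0)
  -- R5a : ∅^φ [?] (P) (∅^(φ-1))  ::  →
  else if C4.Purple ∈ v 1 ∧ (∀ k : ℤ, 2 ≤ k → k ≤ (φ : ℤ) → v k = ∅) then (c, 1)
  -- R5b-1 : ∅^φ [B!] (R!) (∅^(φ-1))  ::  P
  else if c = C4.Blue ∧ v 0 = {C4.Blue} ∧ v 1 = {C4.Red} ∧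
      (∀ k : ℤ, 2 ≤ k → k ≤ (φ : ℤ) → v k = ∅) then (C4.Purple, 0)
  -- R5b-2 : ∅^φ [B!] (R, B) (∅^(φ-1))  ::  P
  else if c = C4.Blue ∧ v 0 = {C4.Blue} ∧ (C4.Red ∈ v 1 ∧ C4.Blue ∈ v 1) ∧
      (∀ k : ℤ, 2 ≤ k → k ≤ (φ : ℤ) → v k = ∅) then (C4.Purple, 0)
  -- R5b-3 : ∅^φ [R [B]] (R!) (∅^(φ-1))  ::  P
  else if c = C4.Blue ∧ C4.Red ∈ v 0 ∧ v 1 = {C4.Red} ∧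
      (∀ k : ℤ, 2 ≤ k → k ≤ (φ : ℤ) → v k = ∅) then (C4.Purple, 0)
  else (c, 0)

open Classical in
/-- Algorithm 2: the rules are applied in the orientation in which the `φ`
nearest nodes on one side are all empty.  A robot seeing no other robot does
nothing (rule R0), and no rule is enabled for a non-border robot. -/
noncomputable def algo2 (φ : ℕ) : Algo C4 where
  out := fun c v =>
    if (∀ k : ℤ, 1 ≤ k → k ≤ (φ : ℤ) → v (-k) = ∅) ∧
       (∀ k : ℤ, 1 ≤ k → k ≤ (φ : ℤ) → v k = ∅) then (c, 0)
    else if ∀ k : ℤ, 1 ≤ k → k ≤ (φ : ℤ) → v (-k) = ∅ then algo2Rules φ c v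
    else if ∀ k : ℤ, 1 ≤ k → k ≤ (φ : ℤ) → v k = ∅ then
      ((algo2Rules φ c (fun k => v (-k))).1, -(algo2Rules φ c (fun k => v (-k))).2)
    else (c, 0)

/-- `#O_W`: the number of nodes hosting a White robot that are not border
nodes. -/
noncomputable def numWhiteNonBorder {N R : ℕ} (φ : ℕ) (cfg : Config N R C4) : ℕ :=
  {u : ZMod N | C4.White ∈ colorsAt cfg u ∧ ¬ isBorderNode φ cfg u}.ncard

end Gathering


namespace Gathering

/-! ### Auxiliary material for Lemma 24 -/

section Aux24

lemma aux_offset_inj {N : ℕ} [NeZero N] {j j' : ℕ} (h1 : 1 ≤ j) (h2 : j ≤ N)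
    (h1' : 1 ≤ j') (h2' : j' ≤ N) (h : (j : ZMod N) = (j' : ZMod N)) : j = j' := by
  rcases eq_or_lt_of_le h2 with rfl | hj
  · rcases eq_or_lt_of_le h2' with rfl | hj'
    · rfl
    · rw [ZMod.natCast_self] at h
      have := congrArg ZMod.val h
      rw [ZMod.val_zero, ZMod.val_cast_of_lt hj'] at this
      omega
  · rcases eq_or_lt_of_le h2' with rfl | hj'
    · rw [ZMod.natCast_self] at h
      have := congrArg ZMod.val h
      rw [ZMod.val_zero, ZMod.val_cast_of_lt hj] at this
      omega
    · have := congrArg ZMod.val h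
      rwa [ZMod.val_cast_of_lt hj, ZMod.val_cast_of_lt hj'] at this

lemma aux_exists_offset {N : ℕ} [NeZero N] (b x : ZMod N) :
    ∃ j : ℕ, 1 ≤ j ∧ j ≤ N ∧ x = b + (j : ZMod N) := by
  by_cases hx : x = b
  · refine ⟨N, Nat.one_le_iff_ne_zero.mpr (NeZero.ne N), le_refl N, ?_⟩
    rw [ZMod.natCast_self, add_zero, hx]
  · refine ⟨(x - b).val, ?_, le_of_lt (ZMod.val_lt _), ?_⟩
    · have h0 : x - b ≠ 0 := sub_ne_zero.mpr hx
      have := (ZMod.val_eq_zero (x - b)).not.mpr h0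
      omega
    · rw [ZMod.natCast_rightInverse (x - b)]
      ring

lemma aux_cast_sub_N {N : ℕ} (a : ℕ) (h : N ≤ a) :
    ((a - N : ℕ) : ZMod N) = (a : ZMod N) := by
  have hh : (a - N) + N = a := by omega
  conv_rhs => rw [← hh]
  rw [Nat.cast_add, ZMod.natCast_self, add_zero]

/-- A window (arc) of the ring, described by a base point and a range of
offsets. -/
def Wset {N : ℕ} (b : ZMod N) (lo hi : ℕ) : Set (ZMod N) :=
  {x | ∃ j : ℕ, lo ≤ j ∧ j ≤ hi ∧ x = b + (j : ZMod N)}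

lemma mem_Wset {N : ℕ} {b : ZMod N} {lo hi : ℕ} {x : ZMod N} :
    x ∈ Wset b lo hi ↔ ∃ j : ℕ, lo ≤ j ∧ j ≤ hi ∧ x = b + (j : ZMod N) := Iff.rfl

/-- Core of Lemma 24: if at time `0` there are two empty runs of length `phi`
(at offsets `[1, phi]` and `[m+1, m+phi]` from a base point `b`), and both of
the two remaining windows host a robot, then a cautious algorithm can never
gather. -/
lemma core_no_gathering (N R phi : ℕ) (C : Type) (hN : 3 ≤ N) (hphi : 1 ≤ phi)
    (A : Algo C) (hA : Cautious phi A) (e : AsyncExec N R C phi A)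
    (b : ZMod N) (m : ℕ) (hm1 : phi + 1 ≤ m) (hm2 : m + phi + 1 ≤ N)
    (hE1 : ∀ k : ℕ, 1 ≤ k → k ≤ phi → ¬ occupiedNode (e.cfg 0) (b + (k : ZMod N)))
    (hE2 : ∀ k : ℕ, 1 ≤ k → k ≤ phi → ¬ occupiedNode (e.cfg 0) (b + ((m + k : ℕ) : ZMod N)))
    (hw1 : ∃ j : ℕ, phi + 1 ≤ j ∧ j ≤ m ∧ occupiedNode (e.cfg 0) (b + (j : ZMod N)))
    (hw2 : ∃ j : ℕ, m + phi + 1 ≤ j ∧ j ≤ N ∧ occupiedNode (e.cfg 0) (b + (j : ZMod N))) :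
    ¬ AchievesGathering e := by
  haveI : NeZero N := ⟨by omega⟩
  have hW1Iff : ∀ j : ℕ, 1 ≤ j → j ≤ N →
      ((b + (j : ZMod N)) ∈ Wset b (phi+1) m ↔ (phi+1 ≤ j ∧ j ≤ m)) := by
    intro j h1 h2
    rw [mem_Wset]
    constructor
    · rintro ⟨j', a1, a2, he⟩
      have := aux_offset_inj h1 h2 (by omega) (by omega) (add_left_cancel he)
      omega
    · intro h
      exact ⟨j, h.1, h.2, rfl⟩
  have hGoodIff : ∀ j : ℕ, 1 ≤ j → j ≤ N →
      ((b + (j : ZMod N)) ∈ Wset b (phi+1) m ∪ Wset b (m+phi+1) N ↔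
        ((phi+1 ≤ j ∧ j ≤ m) ∨ (m+phi+1 ≤ j ∧ j ≤ N))) := by
    intro j h1 h2
    rw [Set.mem_union, mem_Wset, mem_Wset]
    constructor
    · rintro (⟨j', a1, a2, he⟩ | ⟨j', a1, a2, he⟩)
      · have := aux_offset_inj h1 h2 (by omega) (by omega) (add_left_cancel he)
        omega
      · have := aux_offset_inj h1 h2 (by omega) a2 (add_left_cancel he)
        omega
    · rintro (⟨a1, a2⟩ | ⟨a1, a2⟩)
      · exact Or.inl ⟨j, a1, a2, rfl⟩
      · exact Or.inr ⟨j, a1, a2, rfl⟩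
  have hdisj : ∀ x : ZMod N, x ∈ Wset b (phi+1) m → x ∈ Wset b (m+phi+1) N → False := by
    rintro x ⟨j, hja, hjb, rfl⟩ ⟨j', hja', hjb', he⟩
    have := aux_offset_inj (N := N) (by omega : 1 ≤ j) (by omega) (by omega) hjb'
      (add_left_cancel he)
    omega
  -- every occupied node at time 0 is in one of the two windows
  have hocc0 : ∀ x : ZMod N, occupiedNode (e.cfg 0) x →
      x ∈ Wset b (phi+1) m ∪ Wset b (m+phi+1) N := by
    intro x hx
    obtain ⟨j, hj1, hjN, rfl⟩ := aux_exists_offset b x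
    rw [hGoodIff j hj1 hjN]
    have hA1 : ¬(1 ≤ j ∧ j ≤ phi) := fun h => hE1 j h.1 h.2 hx
    have hA2 : ¬(m+1 ≤ j ∧ j ≤ m+phi) := by
      rintro ⟨a, bb⟩
      refine hE2 (j - m) (by omega) (by omega) ?_
      rw [show m + (j - m) = j from by omega]
      exact hx
    omega
  -- key step lemma: moving one step towards a visible window-node stays in
  -- the same window
  have hmove : ∀ x : ZMod N, x ∈ Wset b (phi+1) m ∪ Wset b (m+phi+1) N →
      ∀ κ : ℕ, 1 ≤ κ → κ ≤ phi →
      (((x + (κ : ZMod N)) ∈ Wset b (phi+1) m ∪ Wset b (m+phi+1) N →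
        ((x + 1) ∈ Wset b (phi+1) m ∪ Wset b (m+phi+1) N ∧
          ((x + 1) ∈ Wset b (phi+1) m ↔ x ∈ Wset b (phi+1) m))) ∧
       ((x - (κ : ZMod N)) ∈ Wset b (phi+1) m ∪ Wset b (m+phi+1) N →
        ((x - 1) ∈ Wset b (phi+1) m ∪ Wset b (m+phi+1) N ∧
          ((x - 1) ∈ Wset b (phi+1) m ↔ x ∈ Wset b (phi+1) m)))) := by
    intro x hx κ hκ1 hκ2
    obtain ⟨j, hj1, hjN, hGood, rfl⟩ :
        ∃ j : ℕ, 1 ≤ j ∧ j ≤ N ∧ ((phi+1 ≤ j ∧ j ≤ m) ∨ (m+phi+1 ≤ j ∧ j ≤ N)) ∧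
          x = b + (j : ZMod N) := by
      rcases hx with ⟨j, a1, a2, rfl⟩ | ⟨j, a1, a2, rfl⟩
      · exact ⟨j, by omega, by omega, Or.inl ⟨a1, a2⟩, rfl⟩
      · exact ⟨j, by omega, a2, Or.inr ⟨a1, a2⟩, rfl⟩
    constructor
    · intro hplus
      by_cases hw : j + κ ≤ N
      · have hcast : b + (j : ZMod N) + (κ : ZMod N) = b + ((j + κ : ℕ) : ZMod N) := by
          push_cast; ring
        rw [hcast, hGoodIff _ (by omega) hw] at hplus
        have hcast1 : b + (j : ZMod N) + 1 = b + ((j + 1 : ℕ) : ZMod N) := by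
          push_cast; ring
        rw [hcast1, hGoodIff _ (by omega) (by omega), hW1Iff _ (by omega) (by omega),
          hW1Iff j hj1 hjN]
        omega
      · exfalso
        have hcast : b + (j : ZMod N) + (κ : ZMod N) = b + ((j + κ - N : ℕ) : ZMod N) := by
          rw [aux_cast_sub_N _ (by omega)]; push_cast; ring
        rw [hcast, hGoodIff _ (by omega) (by omega)] at hplus
        omega
    · intro hminus
      have hcast : b + (j : ZMod N) - (κ : ZMod N) = b + ((j - κ : ℕ) : ZMod N) := by
        rw [Nat.cast_sub (by omega : κ ≤ j)]; ring
      rw [hcast, hGoodIff _ (by omega) (by omega)] at hminus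
      have hcast1 : b + (j : ZMod N) - 1 = b + ((j - 1 : ℕ) : ZMod N) := by
        rw [Nat.cast_sub (by omega : 1 ≤ j)]; push_cast; ring
      rw [hcast1, hGoodIff _ (by omega) (by omega), hW1Iff _ (by omega) (by omega),
        hW1Iff j hj1 hjN]
      omega
  -- the invariant
  have hInv : ∀ t : ℕ, ∀ r : Fin R,
      ((e.cfg t).pos r ∈ Wset b (phi+1) m ∪ Wset b (m+phi+1) N) ∧
      (((e.cfg t).pos r ∈ Wset b (phi+1) m) ↔ ((e.cfg 0).pos r ∈ Wset b (phi+1) m)) ∧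
      (∀ c u, e.plan t r = some (c, u) →
        u ∈ Wset b (phi+1) m ∪ Wset b (m+phi+1) N ∧
          (u ∈ Wset b (phi+1) m ↔ (e.cfg 0).pos r ∈ Wset b (phi+1) m)) := by
    intro t
    induction t with
    | zero =>
      intro r
      refine ⟨hocc0 _ ⟨r, rfl⟩, Iff.rfl, ?_⟩
      intro c u hcu
      rw [e.init_plan r] at hcu
      cases hcu
    | succ t ih =>
      intro r
      obtain ⟨hpos, hiff, hplan⟩ := ih r
      have hocct : ∀ w : ZMod N, occupiedNode (e.cfg t) w →
          w ∈ Wset b (phi+1) m ∪ Wset b (m+phi+1) N := by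
        rintro w ⟨r', hr'⟩
        rw [← hr']
        exact (ih r').1
      rcases e.step t r with ⟨h1, h2, h3⟩ | ⟨h0, h1, h2, dir, h3⟩ |
        ⟨c, u, h0, h1, h2, h3⟩ | ⟨c, u, h0, h1, h2, h3⟩
      · rw [h1, h3]
        exact ⟨hpos, hiff, hplan⟩
      · -- Look + Compute
        rw [h1]
        refine ⟨hpos, hiff, ?_⟩
        intro c' u' hcu
        rw [h3] at hcu
        have hu' : moveTarget ((e.cfg t).pos r) dir
            (A.out ((e.cfg t).light r) (nodeView phi (e.cfg t) ((e.cfg t).pos r) dir)).2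
            = u' := congrArg Prod.snd (Option.some.inj hcu)
        -- colors seen in the view come from occupied nodes
        have hcol : ∀ k : ℤ, |k| ≤ (phi : ℤ) →
            nodeView phi (e.cfg t) ((e.cfg t).pos r) dir k ≠ ∅ →
            occupiedNode (e.cfg t)
              ((e.cfg t).pos r + (if dir then (k : ZMod N) else ((-k : ℤ) : ZMod N))) := by
          intro k habs hne
          simp only [nodeView, if_pos habs] at hne
          obtain ⟨cc, r', hr', -⟩ := Set.nonempty_iff_ne_empty.mpr hne
          exact ⟨r', hr'⟩
        have hkey : moveTarget ((e.cfg t).pos r) dir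
              (A.out ((e.cfg t).light r) (nodeView phi (e.cfg t) ((e.cfg t).pos r) dir)).2
              ∈ Wset b (phi+1) m ∪ Wset b (m+phi+1) N ∧
            (moveTarget ((e.cfg t).pos r) dir
              (A.out ((e.cfg t).light r) (nodeView phi (e.cfg t) ((e.cfg t).pos r) dir)).2
              ∈ Wset b (phi+1) m ↔ (e.cfg t).pos r ∈ Wset b (phi+1) m) := by
          rcases hsgn : (A.out ((e.cfg t).light r)
              (nodeView phi (e.cfg t) ((e.cfg t).pos r) dir)).2 with _ | _ | _
          · -- zero : no move
            have htgt : moveTarget ((e.cfg t).pos r) dir SignType.zero = (e.cfg t).pos r := by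
              cases dir <;> simp [moveTarget]
            rw [htgt]
            exact ⟨hpos, Iff.rfl⟩
          · -- neg : move -1 (in the view's orientation)
            obtain ⟨k, hk1, hk2, hkne⟩ :=
              (hA ((e.cfg t).light r) (nodeView phi (e.cfg t) ((e.cfg t).pos r) dir)).2
                (by rw [hsgn]; rfl)
            have habs : |(-k : ℤ)| ≤ (phi : ℤ) := by rw [abs_neg, abs_of_nonneg (by omega)]; omega
            have hocc := hcol (-k) habs hkne
            have hκ : ((k.toNat : ℕ) : ℤ) = k := Int.toNat_of_nonneg (by omega)
            have hκZ : ((k.toNat : ℕ) : ZMod N) = ((k : ℤ) : ZMod N) := by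
              have h' : ((k.toNat : ℤ) : ZMod N) = ((k : ℤ) : ZMod N) := congrArg _ hκ
              rwa [Int.cast_natCast] at h'
            cases dir
            · -- dir = false : node = pos + k, target = pos + 1
              have heq : ((e.cfg t).pos r + if false = true then ((-k : ℤ) : ZMod N)
                  else ((-(-k) : ℤ) : ZMod N)) = (e.cfg t).pos r + (k.toNat : ZMod N) := by
                rw [hκZ]; norm_num
              rw [heq] at hocc
              have := ((hmove _ hpos k.toNat (by omega) (by omega)).1) (hocct _ hocc)
              have htgt : moveTarget ((e.cfg t).pos r) false SignType.neg =
                  (e.cfg t).pos r + 1 := by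
                simp only [moveTarget]; norm_num
              rw [htgt]
              exact this
            · -- dir = true : node = pos - k, target = pos - 1
              have heq : ((e.cfg t).pos r + if true = true then ((-k : ℤ) : ZMod N)
                  else ((-(-k) : ℤ) : ZMod N)) = (e.cfg t).pos r - (k.toNat : ZMod N) := by
                rw [hκZ]; norm_num [sub_eq_add_neg]
              rw [heq] at hocc
              have := ((hmove _ hpos k.toNat (by omega) (by omega)).2) (hocct _ hocc)
              have htgt : moveTarget ((e.cfg t).pos r) true SignType.neg =
                  (e.cfg t).pos r - 1 := by
                simp only [moveTarget]; norm_num [sub_eq_add_neg]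
              rw [htgt]
              exact this
          · -- pos : move +1 (in the view's orientation)
            obtain ⟨k, hk1, hk2, hkne⟩ :=
              (hA ((e.cfg t).light r) (nodeView phi (e.cfg t) ((e.cfg t).pos r) dir)).1
                (by rw [hsgn]; rfl)
            have habs : |(k : ℤ)| ≤ (phi : ℤ) := by rw [abs_of_nonneg (by omega)]; omega
            have hocc := hcol k habs hkne
            have hκ : ((k.toNat : ℕ) : ℤ) = k := Int.toNat_of_nonneg (by omega)
            have hκZ : ((k.toNat : ℕ) : ZMod N) = ((k : ℤ) : ZMod N) := by
              have h' : ((k.toNat : ℤ) : ZMod N) = ((k : ℤ) : ZMod N) := congrArg _ hκ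
              rwa [Int.cast_natCast] at h'
            cases dir
            · -- dir = false : node = pos - k, target = pos - 1
              have heq : ((e.cfg t).pos r + if false = true then (k : ZMod N)
                  else ((-k : ℤ) : ZMod N)) = (e.cfg t).pos r - (k.toNat : ZMod N) := by
                rw [hκZ]; norm_num [sub_eq_add_neg]
              rw [heq] at hocc
              have := ((hmove _ hpos k.toNat (by omega) (by omega)).2) (hocct _ hocc)
              have htgt : moveTarget ((e.cfg t).pos r) false SignType.pos =
                  (e.cfg t).pos r - 1 := by
                simp only [moveTarget]; norm_num [sub_eq_add_neg]
              rw [htgt]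
              exact this
            · -- dir = true : node = pos + k, target = pos + 1
              have heq : ((e.cfg t).pos r + if true = true then (k : ZMod N)
                  else ((-k : ℤ) : ZMod N)) = (e.cfg t).pos r + (k.toNat : ZMod N) := by
                rw [hκZ]; norm_num
              rw [heq] at hocc
              have := ((hmove _ hpos k.toNat (by omega) (by omega)).1) (hocct _ hocc)
              have htgt : moveTarget ((e.cfg t).pos r) true SignType.pos =
                  (e.cfg t).pos r + 1 := by
                simp only [moveTarget]; norm_num
              rw [htgt]
              exact this
        rw [← hu']
        exact ⟨hkey.1, hkey.2.trans hiff⟩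
      · -- end of Compute : color becomes visible
        rw [h1]
        refine ⟨hpos, hiff, ?_⟩
        intro c' u' hcu
        rw [h3] at hcu
        have hu' : u = u' := congrArg Prod.snd (Option.some.inj hcu)
        rw [← hu']
        exact hplan c u h0
      · -- Move
        obtain ⟨huU, huiff⟩ := hplan c u h0
        rw [h1]
        refine ⟨huU, huiff, ?_⟩
        intro c' u' hcu
        rw [h3] at hcu
        cases hcu
  -- conclusion
  rintro ⟨t, g, hgath⟩
  obtain ⟨j1, hj1a, hj1b, r1, hr1⟩ := hw1
  obtain ⟨j2, hj2a, hj2b, r2, hr2⟩ := hw2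
  have hr1W : (e.cfg 0).pos r1 ∈ Wset b (phi+1) m := by
    rw [hr1, mem_Wset]
    exact ⟨j1, hj1a, hj1b, rfl⟩
  have hr2W : (e.cfg 0).pos r2 ∈ Wset b (m+phi+1) N := by
    rw [hr2, mem_Wset]
    exact ⟨j2, hj2a, hj2b, rfl⟩
  have h1 := (hInv t r1).2.1
  have h2 := (hInv t r2).2.1
  rw [hgath t le_rfl r1] at h1
  rw [hgath t le_rfl r2] at h2
  exact hdisj _ (h2.mp (h1.mpr hr1W)) hr2W

end Aux24

/-- **Lemma 24.** A cautious algorithm that starts from a configuration with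
more than two borders cannot solve gathering (robots do not know `R`: the
algorithm is a function of the view only). -/
theorem cautious_more_than_two_borders_impossible
    (N R phi : ℕ) (C : Type) (hN : 3 ≤ N) (hphi : 1 ≤ phi)
    (A : Algo C) (hA : Cautious phi A)
    (e : AsyncExec N R C phi A)
    (hborders : 2 < (borderPairs phi (e.cfg 0)).ncard) :
    ¬ AchievesGathering e := by
  haveI : NeZero N := ⟨by omega⟩
  -- three distinct border pairs
  obtain ⟨p1, hp1, p2, hp2, p3, hp3, h12, h13, h23⟩ :=
    (Set.two_lt_ncard (Set.toFinite _)).mp hborders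
  -- two of them share a direction, at distinct nodes
  obtain ⟨u, u', d, hne, hu, hu'⟩ : ∃ (u u' : ZMod N) (d : Bool), u ≠ u' ∧
      (u, d) ∈ borderPairs phi (e.cfg 0) ∧ (u', d) ∈ borderPairs phi (e.cfg 0) := by
    obtain ⟨u1, d1⟩ := p1
    obtain ⟨u2, d2⟩ := p2
    obtain ⟨u3, d3⟩ := p3
    by_cases h : d1 = d2
    · subst h
      exact ⟨u1, u2, d1, fun he => h12 (by rw [he]), hp1, hp2⟩
    · by_cases h' : d1 = d3
      · subst h'
        exact ⟨u1, u3, d1, fun he => h13 (by rw [he]), hp1, hp3⟩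
      · have hd : d2 = d3 := by cases d1 <;> cases d2 <;> cases d3 <;> simp_all
        subst hd
        exact ⟨u2, u3, d2, fun he => h23 (by rw [he]), hp2, hp3⟩
  obtain ⟨huocc, hurun⟩ := hu
  obtain ⟨hu'occ, hu'run⟩ := hu'
  cases d
  · -- dir = false : the empty runs are just before `u` and just before `u'`
    have hurunN : ∀ κ : ℕ, 1 ≤ κ → κ ≤ phi →
        ¬ occupiedNode (e.cfg 0) (u - (κ : ZMod N)) := by
      intro κ a b2
      have h := hurun (κ : ℤ) (by exact_mod_cast a) (by exact_mod_cast b2)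
      have he : u + ((-(κ : ℤ) : ℤ) : ZMod N) = u - (κ : ZMod N) := by push_cast; ring
      simp only [if_neg (by simp : ¬ (false = true))] at h
      rwa [he] at h
    have hu'runN : ∀ κ : ℕ, 1 ≤ κ → κ ≤ phi →
        ¬ occupiedNode (e.cfg 0) (u' - (κ : ZMod N)) := by
      intro κ a b2
      have h := hu'run (κ : ℤ) (by exact_mod_cast a) (by exact_mod_cast b2)
      have he : u' + ((-(κ : ℤ) : ℤ) : ZMod N) = u' - (κ : ZMod N) := by push_cast; ring
      simp only [if_neg (by simp : ¬ (false = true))] at h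
      rwa [he] at h
    set bq : ZMod N := u - (((phi+1 : ℕ) : ℕ) : ZMod N) with hbq
    have hbu : bq + ((phi + 1 : ℕ) : ZMod N) = u := by rw [hbq]; ring
    have hident : ∀ i : ℕ, i ≤ phi + 1 →
        bq + (i : ZMod N) = u - (((phi + 1 - i : ℕ) : ℕ) : ZMod N) := by
      intro i hi
      rw [Nat.cast_sub hi, hbq]
      push_cast
      ring
    obtain ⟨j, hj1, hjN, hju'⟩ := aux_exists_offset bq u'
    have hB1 : ¬(j ≤ phi) := by
      intro h
      refine hurunN (phi + 1 - j) (by omega) (by omega) ?_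
      rw [← hident j (by omega), ← hju']
      exact hu'occ
    have hB2 : j ≠ phi + 1 := by
      intro h
      apply hne
      rw [hju', h, hbu]
    have hB3 : ¬(phi + 2 ≤ j ∧ j ≤ 2*phi + 1) := by
      rintro ⟨a, b2⟩
      refine hu'runN (j - (phi + 1)) (by omega) (by omega) ?_
      have he : u' - ((j - (phi+1) : ℕ) : ZMod N) = u := by
        rw [hju', Nat.cast_sub (by omega : phi + 1 ≤ j), ← hbu]
        push_cast
        ring
      rw [he]
      exact huocc
    have hjbig : 2*phi + 2 ≤ j := by omega
    refine core_no_gathering N R phi C hN hphi A hA e bq (j - (phi+1))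
      (by omega) (by omega) ?_ ?_ ?_ ?_
    · intro κ a b2
      rw [hident κ (by omega)]
      exact hurunN (phi + 1 - κ) (by omega) (by omega)
    · intro κ a b2
      have he : bq + (((j - (phi+1)) + κ : ℕ) : ZMod N)
          = u' - (((phi + 1 - κ : ℕ) : ℕ) : ZMod N) := by
        rw [show (j - (phi+1)) + κ = j - (phi + 1 - κ) from by omega,
          Nat.cast_sub (by omega : phi + 1 - κ ≤ j), hju']
        ring
      rw [he]
      exact hu'runN (phi + 1 - κ) (by omega) (by omega)
    · refine ⟨phi + 1, le_refl _, by omega, ?_⟩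
      rw [hbu]
      exact huocc
    · refine ⟨j, by omega, hjN, ?_⟩
      rw [← hju']
      exact hu'occ
  · -- dir = true : the empty runs are just after `u` and just after `u'`
    have hurunN : ∀ κ : ℕ, 1 ≤ κ → κ ≤ phi →
        ¬ occupiedNode (e.cfg 0) (u + (κ : ZMod N)) := by
      intro κ a b2
      have h := hurun (κ : ℤ) (by exact_mod_cast a) (by exact_mod_cast b2)
      simpa using h
    have hu'runN : ∀ κ : ℕ, 1 ≤ κ → κ ≤ phi →
        ¬ occupiedNode (e.cfg 0) (u' + (κ : ZMod N)) := by
      intro κ a b2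
      have h := hu'run (κ : ℤ) (by exact_mod_cast a) (by exact_mod_cast b2)
      simpa using h
    obtain ⟨j, hj1, hjN, hju'⟩ := aux_exists_offset u u'
    have hjne : j ≠ N := by
      intro h
      apply hne
      rw [hju', h, ZMod.natCast_self, add_zero]
    have hA1 : ¬(j ≤ phi) := by
      intro h
      refine hurunN j hj1 h ?_
      rw [← hju']
      exact hu'occ
    have hA2 : ¬(N - phi ≤ j) := by
      intro h
      refine hu'runN (N - j) (by omega) (by omega) ?_
      have he : u' + ((N - j : ℕ) : ZMod N) = u := by
        rw [hju', add_assoc, ← Nat.cast_add,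
          show j + (N - j) = N from by omega, ZMod.natCast_self, add_zero]
      rw [he]
      exact huocc
    refine core_no_gathering N R phi C hN hphi A hA e u j (by omega) (by omega)
      hurunN ?_ ?_ ?_
    · intro κ a b2
      have he : u + ((j + κ : ℕ) : ZMod N) = u' + (κ : ZMod N) := by
        rw [hju']
        push_cast
        ring
      rw [he]
      exact hu'runN κ a b2
    · refine ⟨j, by omega, le_refl j, ?_⟩
      rw [← hju']
      exact hu'occ
    · refine ⟨N, by omega, le_refl N, ?_⟩
      rw [ZMod.natCast_self, add_zero]
      exact huocc


end Gathering
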